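/- arXiv:2204.04570 — 3 statements merged into one kernel-verified Lean document; each statement's English description precedes it below -/
import Mathlib

section
/- Special case of the Leibniz rule: for a smooth function φ on a closed Riemannian 4-manifold, P_g(φ²) = 2φ P_g(φ) + 2(Δ_g φ)² + 4⟨∇_g Δ_g φ, ∇_g φ⟩ + 2Δ_g|∇_g φ|² - (4/3) R_g |∇_g φ|² + 4 Ric_g(∇_g φ, ∇_g φ). -/
/-- Special case of the Leibniz rule for the Paneitz operator:
`P_g(φ²) = 2φ P_g φ + 2(Δφ)² + 4⟨∇Δφ,∇φ⟩ + 2Δ|∇φ|² - (4/3) R |∇φ|² + 4 Ric(∇φ,∇φ)`.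
Here `Δ` is the Laplace–Beltrami operator, `G f h = ⟨∇f,∇h⟩` (so `G φ φ = |∇φ|²`),
`RicG f h = Ric(∇f,∇h)`, `Rs` the scalar curvature, `DR f = div(R ∇f)`,
`DRic f = ∑ᵢ div(Ric(∇f,Eᵢ)Eᵢ)`, and `P f = Δ²f - (2/3) DR f + 2 DRic f`. -/
theorem paneitz_leibniz_rule_square {M : Type*}
    (Δ DR DRic : (M → ℝ) → (M → ℝ))
    (G RicG : (M → ℝ) → (M → ℝ) → (M → ℝ)) (Rs : M → ℝ)
    (P : (M → ℝ) → (M → ℝ))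
    (hP : ∀ (f : M → ℝ) (x : M),
      P f x = Δ (Δ f) x - (2 / 3) * DR f x + 2 * DRic f x)
    (hΔmul : ∀ (f h : M → ℝ) (x : M),
      Δ (fun y => f y * h y) x = f x * Δ h x + h x * Δ f x + 2 * G f h x)
    (hΔadd : ∀ (f h : M → ℝ) (x : M),
      Δ (fun y => f y + h y) x = Δ f x + Δ h x)
    (hΔsmul : ∀ (c : ℝ) (f : M → ℝ) (x : M),
      Δ (fun y => c * f y) x = c * Δ f x)
    (hGsymm : ∀ (f h : M → ℝ) (x : M), G f h x = G h f x)
    (hDR : ∀ (f h : M → ℝ) (x : M),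
      DR (fun y => f y * h y) x = h x * DR f x + f x * DR h x + 2 * Rs x * G f h x)
    (hDRic : ∀ (f h : M → ℝ) (x : M),
      DRic (fun y => f y * h y) x
        = h x * DRic f x + f x * DRic h x + 2 * RicG f h x)
    (φ : M → ℝ) :
    ∀ x : M, P (fun y => (φ y) ^ 2) x =
      2 * φ x * P φ x + 2 * (Δ φ x) ^ 2 + 4 * G (Δ φ) φ x
        + 2 * Δ (G φ φ) x - (4 / 3) * Rs x * G φ φ x + 4 * RicG φ φ x := by
  intro x
  have h2 : (fun y => (φ y) ^ 2) = (fun y => φ y * φ y) := by funext y; ring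
  have e1 : Δ (fun y => φ y * φ y)
      = fun y => φ y * Δ φ y + (φ y * Δ φ y + 2 * G φ φ y) := by
    funext y; rw [hΔmul]; ring
  rw [hP, h2, e1, hΔadd, hΔadd, hΔsmul, hΔmul, hDR, hDRic, hP, hGsymm (Δ φ) φ]
  ring
end

section
/- Hersch-type bound for the Paneitz operator: if g_w = e^{2w} g_r is a conformal metric on S^4 with Vol(S^4, g_w) = ω_4, and if the balanced condition ∫_{S^4} e^{4w} x_i dv_{g_r} = 0 holds for i = 1,...,5, then λ_2(P_{g_w}) ≤ 24. -/
/-! Test the Rayleigh quotient of `P_{g_w}` with the five coordinate functions, which are admissible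
by the balanced condition. Conformal invariance turns each numerator into `24 ∫ x_i² dv_{g_r}`, and
since `∑ x_i² = 1`, summing over `i` gives `λ₂ · Vol(g_w) ≤ 24 · Vol(g_r)`; the volumes agree. -/

open MeasureTheory

/-- The `i`-th standard coordinate function of `ℝ⁵` restricted to the round sphere `S⁴`. -/
noncomputable def sphereCoord (i : Fin 5)
    (p : Metric.sphere (0 : EuclideanSpace ℝ (Fin 5)) 1) : ℝ :=
  (p : EuclideanSpace ℝ (Fin 5)) i

theorem EuclideanSpace.sum_sq_eq_one_of_mem_sphere {ι : Type*} [Fintype ι]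
    {x : EuclideanSpace ℝ ι} (hx : x ∈ Metric.sphere (0 : EuclideanSpace ℝ ι) 1) :
    ∑ i, x i ^ 2 = 1 := by
  rw [← EuclideanSpace.real_norm_sq_eq, mem_sphere_zero_iff_norm.mp hx, one_pow]

theorem sphereCoord_sum_sq (p : Metric.sphere (0 : EuclideanSpace ℝ (Fin 5)) 1) :
    ∑ i, sphereCoord i p ^ 2 = 1 :=
  EuclideanSpace.sum_sq_eq_one_of_mem_sphere p.2

theorem continuous_sphereCoord (i : Fin 5) : Continuous (sphereCoord i) :=
  (continuous_apply i).comp ((PiLp.continuous_ofLp 2 _).comp continuous_subtype_val)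

section PartitionOfUnity

variable {X ι : Type*} [MeasurableSpace X] [Fintype ι] {μ : Measure X} {f : ι → X → ℝ}

theorem integrable_sq_mul_of_sum_sq_eq_one (hf : ∀ i, AEStronglyMeasurable (f i) μ)
    (hsum : ∀ x, ∑ i, f i x ^ 2 = 1) {ρ : X → ℝ} (hρ : Integrable ρ μ) (i : ι) :
    Integrable (fun x => f i x ^ 2 * ρ x) μ := by
  refine hρ.bdd_mul (c := 1) ((hf i).pow 2) (.of_forall fun x => ?_)
  rw [Real.norm_eq_abs, abs_of_nonneg (sq_nonneg _), ← hsum x]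
  exact Finset.single_le_sum (fun j _ => sq_nonneg (f j x)) (Finset.mem_univ i)

theorem sum_integral_sq_mul_eq_integral (hf : ∀ i, AEStronglyMeasurable (f i) μ)
    (hsum : ∀ x, ∑ i, f i x ^ 2 = 1) {ρ : X → ℝ} (hρ : Integrable ρ μ) :
    ∑ i, ∫ x, f i x ^ 2 * ρ x ∂μ = ∫ x, ρ x ∂μ := by
  rw [← integral_finsetSum _ fun i _ => integrable_sq_mul_of_sum_sq_eq_one hf hsum hρ i]
  simp only [← Finset.sum_mul, hsum, one_mul]

theorem sum_integral_sq_eq_measureReal_univ [IsFiniteMeasure μ]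
    (hf : ∀ i, AEStronglyMeasurable (f i) μ) (hsum : ∀ x, ∑ i, f i x ^ 2 = 1) :
    ∑ i, ∫ x, f i x ^ 2 ∂μ = μ.real Set.univ := by
  simpa using sum_integral_sq_mul_eq_integral hf hsum (integrable_const (1 : ℝ))

theorem le_of_forall_mul_integral_sq_mul_le [IsFiniteMeasure μ]
    (hf : ∀ i, AEStronglyMeasurable (f i) μ) (hsum : ∀ x, ∑ i, f i x ^ 2 = 1)
    (hμ : 0 < μ.real Set.univ) {ρ : X → ℝ} (hρ : Integrable ρ μ)
    (hmass : ∫ x, ρ x ∂μ = μ.real Set.univ) {lam c : ℝ}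
    (hle : ∀ i, lam * ∫ x, f i x ^ 2 * ρ x ∂μ ≤ c * ∫ x, f i x ^ 2 ∂μ) :
    lam ≤ c := by
  refine le_of_mul_le_mul_right ?_ hμ
  calc lam * μ.real Set.univ
      = ∑ i, lam * ∫ x, f i x ^ 2 * ρ x ∂μ := by
        rw [← Finset.mul_sum, sum_integral_sq_mul_eq_integral hf hsum hρ, hmass]
    _ ≤ ∑ i, c * ∫ x, f i x ^ 2 ∂μ := Finset.sum_le_sum fun i _ => hle i
    _ = c * μ.real Set.univ := by
        rw [← Finset.mul_sum, sum_integral_sq_eq_measureReal_univ hf hsum]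

end PartitionOfUnity

/-- Hersch-type bound for the Paneitz operator on `S⁴`.  Let `μ` be the
round volume measure, `g_w = e^{2w} g_r` a conformal metric with the same volume
(`∫ e^{4w} dμ = ω₄ = μ(S⁴)`), satisfying the balanced condition
`∫ e^{4w} x_i dμ = 0` for `i = 1,…,5`.  Using the conformal invariance of the Paneitz
energy (`∫ φ P_{g_w} φ dv_{g_w} = ∫ φ P_{g_r} φ dv_{g_r}`), `dv_{g_w} = e^{4w} dv_{g_r}`,
and the variational characterization of `λ₂(P_{g_w})` over test functions with
`∫ φ dv_{g_w} = 0`, together with `P_{g_r} x_i = 24 x_i`, one gets `λ₂(P_{g_w}) ≤ 24`. -/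
theorem hersch_bound_paneitz_sphere
    (μ : Measure (Metric.sphere (0 : EuclideanSpace ℝ (Fin 5)) 1)) [IsFiniteMeasure μ]
    (hμpos : 0 < (μ Set.univ).toReal)
    (w : Metric.sphere (0 : EuclideanSpace ℝ (Fin 5)) 1 → ℝ)
    (Pgr : (Metric.sphere (0 : EuclideanSpace ℝ (Fin 5)) 1 → ℝ) →
           (Metric.sphere (0 : EuclideanSpace ℝ (Fin 5)) 1 → ℝ))
    (lam2 : ℝ)
    (hPgr : ∀ (i : Fin 5) p, Pgr (sphereCoord i) p = 24 * sphereCoord i p)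
    (hexp : Integrable (fun p => Real.exp (4 * w p)) μ)
    (hvol : ∫ p, Real.exp (4 * w p) ∂μ = (μ Set.univ).toReal)
    (hbal : ∀ i : Fin 5, ∫ p, Real.exp (4 * w p) * sphereCoord i p ∂μ = 0)
    (hlam : ∀ φ : Metric.sphere (0 : EuclideanSpace ℝ (Fin 5)) 1 → ℝ,
      (∫ p, φ p * Real.exp (4 * w p) ∂μ) = 0 →
      lam2 * ∫ p, (φ p) ^ 2 * Real.exp (4 * w p) ∂μ ≤ ∫ p, φ p * Pgr φ p ∂μ) :
    lam2 ≤ 24 := by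
  refine le_of_forall_mul_integral_sq_mul_le
    (fun i => (continuous_sphereCoord i).aestronglyMeasurable) sphereCoord_sum_sq hμpos hexp hvol
    fun i => ?_
  have hmean : ∫ p, sphereCoord i p * Real.exp (4 * w p) ∂μ = 0 := by
    simpa only [mul_comm] using hbal i
  calc lam2 * ∫ p, sphereCoord i p ^ 2 * Real.exp (4 * w p) ∂μ
      ≤ ∫ p, sphereCoord i p * Pgr (sphereCoord i) p ∂μ := hlam _ hmean
    _ = 24 * ∫ p, sphereCoord i p ^ 2 ∂μ := by
        rw [← integral_const_mul]
        congr 1 with p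
        rw [hPgr]
        ring
end

section
/- If λ ≠ 0 is an eigenvalue of the Paneitz operator P_g on a closed 4-manifold, and φ is an eigenfunction with φ² constant, then a contradiction arises; hence a nonzero eigenvalue admitting a single eigenfunction φ with φ² ≡ 1 is impossible. In particular, if at a C-extremal metric the extremal family consists of a single eigenfunction, the eigenvalue must be degenerate (multiplicity ≥ 2). -/
/-- On a closed connected manifold, a nonzero eigenvalue `λ` of the
Paneitz operator `P_g` (which annihilates constants) cannot admit an eigenfunction `φ`
with `φ² ≡ 1`: this is impossible.  (Hence at a C-extremal metric the extremal family
cannot consist of a single eigenfunction, i.e. the eigenvalue is degenerate.) -/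
theorem no_single_extremal_eigenfunction {M : Type*} [TopologicalSpace M]
    [ConnectedSpace M] [Nonempty M]
    (P : (M → ℝ) → (M → ℝ))
    (hPconst : ∀ c : ℝ, ∀ x : M, P (fun _ => c) x = 0)
    (φ : M → ℝ) (hφ : Continuous φ) (hsq : ∀ x, (φ x) ^ 2 = 1)
    (lam : ℝ) (hlam : lam ≠ 0)
    (heig : ∀ x, P φ x = lam * φ x) : False := by
  have hval : ∀ x, φ x = 1 ∨ φ x = -1 := by
    intro x
    have h := hsq x
    have : (φ x - 1) * (φ x + 1) = 0 := by ring_nf; nlinarith [hsq x]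
    rcases mul_eq_zero.mp this with h1 | h1
    · left; linarith
    · right; linarith
  -- the set where φ = 1 is clopen
  have hset : {x | φ x = 1} = φ ⁻¹' (Set.Ioi 0) := by
    ext x
    simp only [Set.mem_setOf_eq, Set.mem_preimage, Set.mem_Ioi]
    constructor
    · intro h; rw [h]; norm_num
    · intro h
      rcases hval x with h1 | h1
      · exact h1
      · rw [h1] at h; linarith
  have hclopen : IsClopen {x | φ x = 1} := by
    constructor
    · have : {x | φ x = 1} = φ ⁻¹' ({1} : Set ℝ) := rfl
      rw [this]
      exact isClosed_singleton.preimage hφ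
    · rw [hset]
      exact isOpen_Ioi.preimage hφ
  have hconst : ∃ c : ℝ, c ≠ 0 ∧ ∀ x, φ x = c := by
    rcases isClopen_iff.mp hclopen with h | h
    · refine ⟨-1, by norm_num, fun x => ?_⟩
      rcases hval x with h1 | h1
      · exfalso
        have : x ∈ ({} : Set M) := h ▸ h1
        exact this
      · exact h1
    · refine ⟨1, by norm_num, fun x => ?_⟩
      have : x ∈ {x | φ x = 1} := h ▸ Set.mem_univ x
      exact this
  obtain ⟨c, hc, hcφ⟩ := hconst
  obtain ⟨x₀⟩ := ‹Nonempty M›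
  have hφeq : φ = fun _ => c := funext hcφ
  have h0 : P φ x₀ = 0 := by rw [hφeq]; exact hPconst c x₀
  have := heig x₀
  rw [h0, hcφ x₀] at this
  exact hc (by
    rcases mul_eq_zero.mp this.symm with h | h
    · exact absurd h hlam
    · exact h)
end
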